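/- Let f be analytic on a disk around α with α a simple zero of f (f(α)=0, f'(α)≠0). Define H_n(z) = D^n((z-α)/f(z)) / D^n(1/f(z)) for z ≠ α near α where both are defined and the denominator is nonzero. Then for each fixed z sufficiently close to α, H_n(z) = O((z-α)^{n+1}) as a function of z; in particular there exist constants C, δ > 0 such that |H_n(z)| ≤ C|z-α|^{n+1} for |z-α| < δ. -/

import Mathlib

/-!
Write `f z = (z - α) g(z)` with `g = dslope f α` analytic and `g α = f'(α) ≠ 0`, and put
`Q = 1 / g`. Then `(z - α) / f(z) = Q(z)` and `1 / f(z) = Q(z) / (z - α)` for `z ≠ α`, and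
induction on `n` gives `Dⁿ (Q(z) / (z - α)) = Gₙ(z) / (z - α)ⁿ⁺¹` with `Gₙ` analytic and
`Gₙ(α) = (-1)ⁿ n! Q(α) ≠ 0`. Hence `Hₙ(z) = (z - α)ⁿ⁺¹ · DⁿQ(z) / Gₙ(z)`, and the last
quotient is continuous, hence bounded, near `α`.
-/

open Filter Topology

section PoleNumerator

variable {𝕜 : Type*} [NontriviallyNormedField 𝕜]

noncomputable def poleNumerator (α : 𝕜) (Q : 𝕜 → 𝕜) : ℕ → 𝕜 → 𝕜
  | 0 => Q
  | k + 1 => fun z => deriv (poleNumerator α Q k) z * (z - α) - (k + 1) * poleNumerator α Q k z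

theorem poleNumerator_self (α : 𝕜) (Q : 𝕜 → 𝕜) (k : ℕ) :
    poleNumerator α Q k α = (-1) ^ k * k.factorial * Q α := by
  induction k with
  | zero => simp [poleNumerator]
  | succ k ih =>
    simp only [poleNumerator, ih, sub_self, mul_zero, Nat.factorial_succ]
    push_cast
    ring

variable [CompleteSpace 𝕜] {α z : 𝕜} {Q : 𝕜 → 𝕜}

theorem analyticAt_poleNumerator (hQ : AnalyticAt 𝕜 Q z) (k : ℕ) :
    AnalyticAt 𝕜 (poleNumerator α Q k) z := by
  induction k with
  | zero => exact hQ
  | succ k ih =>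
    show AnalyticAt 𝕜 (fun z => deriv _ z * (z - α) - (k + 1) * poleNumerator α Q k z) z
    exact (ih.deriv.mul (analyticAt_id.sub analyticAt_const)).sub (analyticAt_const.mul ih)

theorem iteratedDeriv_div_sub (hQ : AnalyticAt 𝕜 Q z) (hz : z ≠ α) (k : ℕ) :
    iteratedDeriv k (fun x => Q x / (x - α)) z = poleNumerator α Q k z / (z - α) ^ (k + 1) := by
  induction k generalizing z with
  | zero => simp [poleNumerator]
  | succ k ih =>
    have hz' : z - α ≠ 0 := sub_ne_zero.mpr hz
    have hnear : iteratedDeriv k (fun x => Q x / (x - α)) =ᶠ[𝓝 z]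
        fun x => poleNumerator α Q k x / (x - α) ^ (k + 1) := by
      filter_upwards [hQ.eventually_analyticAt, isOpen_ne.mem_nhds hz] with x hQx hx
      exact ih hQx hx
    have hG : HasDerivAt (poleNumerator α Q k) (deriv (poleNumerator α Q k) z) z :=
      (analyticAt_poleNumerator hQ k).differentiableAt.hasDerivAt
    have hpow : HasDerivAt (fun x => (x - α) ^ (k + 1)) ((k + 1 : ℕ) * (z - α) ^ k) z := by
      simpa using ((hasDerivAt_id z).sub_const α).fun_pow (k + 1)
    rw [iteratedDeriv_succ, hnear.deriv_eq, (hG.fun_div hpow (pow_ne_zero _ hz')).deriv]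
    simp only [poleNumerator]
    field_simp
    push_cast
    ring

end PoleNumerator

theorem AnalyticAt.dslope {𝕜 E : Type*} [NontriviallyNormedField 𝕜] [NormedAddCommGroup E]
    [NormedSpace 𝕜 E] {f : 𝕜 → E} {a : 𝕜} (hf : AnalyticAt 𝕜 f a) :
    AnalyticAt 𝕜 (dslope f a) a :=
  let ⟨_, hp⟩ := hf
  hp.has_fpower_series_dslope_fslope.analyticAt

theorem exists_pos_norm_div_le_of_continuousAt {X 𝕜 : Type*} [TopologicalSpace X]
    [NormedDivisionRing 𝕜] {u v : X → 𝕜} {a : X} (hu : ContinuousAt u a)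
    (hv : ContinuousAt v a) (ha : v a ≠ 0) :
    ∃ C > 0, ∀ᶠ x in 𝓝 a, ‖u x / v x‖ ≤ C :=
  ⟨‖u a / v a‖ + 1, by positivity,
    ((hu.div hv ha).norm.eventually_lt continuousAt_const (lt_add_one _)).mono
      fun _ hx => hx.le⟩

theorem stmt_4_general (f : ℝ → ℝ) (α : ℝ) (hf : AnalyticAt ℝ f α)
    (hα : f α = 0) (hα' : deriv f α ≠ 0) (n : ℕ) :
    ∃ C > 0, ∃ δ > 0, ∀ z : ℝ, 0 < |z - α| → |z - α| < δ →
      f z ≠ 0 → iteratedDeriv n (fun x => 1 / f x) z ≠ 0 →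
      |iteratedDeriv n (fun x => (x - α) / f x) z /
          iteratedDeriv n (fun x => 1 / f x) z| ≤ C * |z - α| ^ (n + 1) := by
  have hg0 : dslope f α α ≠ 0 := by rwa [dslope_same]
  set g := dslope f α
  have hfg (x : ℝ) : f x = (x - α) * g x := by simpa [hα] using (sub_smul_dslope f α x).symm
  set Q := fun x => (g x)⁻¹
  have hQ : AnalyticAt ℝ Q α := hf.dslope.inv hg0
  -- Both sides vanish at `α` (`1 / 0 = 0`), so this holds on all of `ℝ`.
  have hrecip : (fun x => 1 / f x) = fun x => Q x / (x - α) := by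
    ext x; simp [hfg, Q, div_eq_mul_inv, mul_comm]
  have hnum (z : ℝ) (hz : z ≠ α) :
      iteratedDeriv n (fun x => (x - α) / f x) z = iteratedDeriv n Q z := by
    refine EventuallyEq.iteratedDeriv_eq n ?_
    filter_upwards [isOpen_ne.mem_nhds hz] with x hx
    rw [hfg, div_mul_cancel_left₀ (sub_ne_zero.mpr hx)]
  have hGα : poleNumerator α Q n α ≠ 0 := by
    rw [poleNumerator_self]
    exact mul_ne_zero (by simp [Nat.factorial_ne_zero]) (inv_ne_zero hg0)
  have hDQ : ContinuousAt (iteratedDeriv n Q) α := by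
    rw [iteratedDeriv_eq_iterate]
    exact (hQ.iterated_deriv n).continuousAt
  obtain ⟨C, hC, hbound⟩ := exists_pos_norm_div_le_of_continuousAt hDQ
    (analyticAt_poleNumerator hQ n).continuousAt hGα
  obtain ⟨δ, hδ, hball⟩ := Metric.eventually_nhds_iff.mp (hbound.and hQ.eventually_analyticAt)
  refine ⟨C, hC, δ, hδ, fun z hz0 hzδ _ _ => ?_⟩
  have hzα : z ≠ α := sub_ne_zero.mp (abs_pos.mp hz0)
  obtain ⟨hb, hQz⟩ := hball (by rwa [Real.dist_eq])
  rw [hnum z hzα, hrecip, iteratedDeriv_div_sub hQz hzα]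
  calc |iteratedDeriv n Q z / (poleNumerator α Q n z / (z - α) ^ (n + 1))|
      = |iteratedDeriv n Q z / poleNumerator α Q n z| * |z - α| ^ (n + 1) := by
        rw [div_div_eq_mul_div, mul_div_right_comm, abs_mul, abs_pow]
    _ ≤ C * |z - α| ^ (n + 1) := by gcongr; exact hb

theorem stmt_4 (f : ℝ → ℝ) (α : ℝ) (hf : AnalyticAt ℝ f α)
    (hα : f α = 0) (hα' : deriv f α ≠ 0) (n : ℕ) (hn : 1 ≤ n) :
    ∃ C > 0, ∃ δ > 0, ∀ z : ℝ, 0 < |z - α| → |z - α| < δ →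
      f z ≠ 0 → iteratedDeriv n (fun x => 1 / f x) z ≠ 0 →
      |iteratedDeriv n (fun x => (x - α) / f x) z /
          iteratedDeriv n (fun x => 1 / f x) z| ≤ C * |z - α| ^ (n + 1) :=
  stmt_4_general f α hf hα hα' n
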